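/- Let d ≥ 2, let ρ be a d × d density matrix, and let 0 < s′ < s. Then the set { η : η is a d × d density matrix and S_{m,ρ,s′}(η) ≥ 0 for all m ∈ {1, …, d} } is a strict subset of the set { η : η is a d × d density matrix and S_{m,ρ,s}(η) ≥ 0 for all m ∈ {1, …, d} }. -/

import Mathlib

/-!
For Hermitian `A`, Newton's identities identify `S_m(A)` with the `m`-th elementary symmetric
function of the eigenvalues of `A`, and by Vieta these are all nonnegative exactly when the
eigenvalues are. So `η` lies in the region for `s` iff `(1 + s) η - ρ` is positive semidefinite,
and since `(1 + s) η - ρ = ((1 + s') η - ρ) + (s - s') η` the region grows with `s`.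
Strictness: pick `i` with `ρᵢᵢ > 0` and `j ≠ i`, and let `η = (ρ + s |j⟩⟨j|) / (1 + s)`.
Then `(1 + s) η - ρ = s |j⟩⟨j| ≥ 0`, while the `(i, i)` entry of `(1 + s') η - ρ` is
`-(s - s') ρᵢᵢ / (1 + s) < 0`.
-/

open scoped ComplexOrder

/-- A density matrix: positive semidefinite (hence Hermitian) with trace 1. -/
def IsDensityMatrix {d : ℕ} (A : Matrix (Fin d) (Fin d) ℂ) : Prop :=
  A.PosSemidef ∧ A.trace = 1

/-- `Spoly A m` is the recursively defined quantity `S_m(A)`. -/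
noncomputable def Spoly {d : ℕ} (A : Matrix (Fin d) (Fin d) ℂ) : ℕ → ℂ
  | 0 => 1
  | m + 1 => ((m : ℂ) + 1)⁻¹ *
      ∑ l ∈ Finset.range (m + 1), (-1 : ℂ) ^ l * (A ^ (l + 1)).trace * Spoly A (m - l)

/-- `Sres ρ s m η = S_{m,ρ,s}(η) = S_m(((1+s)η − ρ)/s)`. -/
noncomputable def Sres {d : ℕ} (ρ : Matrix (Fin d) (Fin d) ℂ) (s : ℝ) (m : ℕ)
    (η : Matrix (Fin d) (Fin d) ℂ) : ℂ :=
  Spoly ((s : ℂ)⁻¹ • (((1 : ℂ) + (s : ℂ)) • η - ρ)) m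

open Finset

theorem MvPolynomial.succ_mul_esymm_eq_sum (σ R : Type*) [Fintype σ] [CommRing R] (k : ℕ) :
    ((k + 1 : ℕ) : MvPolynomial σ R) * esymm σ R (k + 1) =
      ∑ l ∈ range (k + 1), (-1) ^ l * psum σ R (l + 1) * esymm σ R (k - l) := by
  have h := mul_esymm_eq_sum σ R (k + 1)
  rw [sum_filter, Nat.sum_antidiagonal_eq_sum_range_succ_mk, sum_range_succ] at h
  rw [h, if_neg (lt_irrefl _), add_zero, mul_sum, ← sum_range_reflect]
  refine sum_congr rfl fun l hl => ?_
  have hl : l < k + 1 := mem_range.mp hl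
  rw [if_pos (by omega), show k + 1 - (k + 1 - 1 - l) = l + 1 by omega,
    show k + 1 - 1 - l = k - l by omega]
  have hsign : (-1 : MvPolynomial σ R) ^ (k + 1 + 1) * (-1) ^ (k - l) = (-1) ^ l := by
    rw [← pow_add, show k + 1 + 1 + (k - l) = l + 2 * (k - l + 1) by omega, pow_add, pow_mul]
    simp
  rw [← hsign]
  ring

theorem Multiset.succ_mul_esymm_map_eq_sum {ι R : Type*} [Fintype ι] [CommRing R] (μ : ι → R)
    (k : ℕ) :
    ((k + 1 : ℕ) : R) * (univ.val.map μ).esymm (k + 1) =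
      ∑ l ∈ Finset.range (k + 1),
        (-1) ^ l * (∑ i, μ i ^ (l + 1)) * (univ.val.map μ).esymm (k - l) := by
  have h := congrArg (MvPolynomial.aeval μ) (MvPolynomial.succ_mul_esymm_eq_sum ι R k)
  simpa only [map_mul, map_sum, map_pow, map_neg, map_one, map_natCast,
    MvPolynomial.aeval_esymm_eq_multiset_esymm, MvPolynomial.psum, MvPolynomial.aeval_X] using h

theorem Multiset.esymm_nonneg {R : Type*} [CommSemiring R] [PartialOrder R] [IsOrderedRing R]
    {s : Multiset R} (hs : ∀ a ∈ s, 0 ≤ a) (k : ℕ) : 0 ≤ s.esymm k := by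
  refine Multiset.sum_nonneg fun x hx => ?_
  obtain ⟨t, ht, rfl⟩ := Multiset.mem_map.mp hx
  exact Multiset.prod_nonneg fun a ha =>
    hs a (Multiset.mem_of_le (Multiset.mem_powersetCard.mp ht).1 ha)

open Polynomial in
theorem Multiset.nonneg_of_forall_esymm_nonneg {R : Type*} [CommRing R] [LinearOrder R]
    [IsStrictOrderedRing R] {s : Multiset R}
    (hs : ∀ k ∈ Finset.Icc 1 (card s), 0 ≤ s.esymm k) {a : R} (ha : a ∈ s) : 0 ≤ a := by
  by_contra! hneg
  -- Vieta: `∏ (x + r) = ∑ₖ eₖ x ^ (n - k)` vanishes at `x = -a`, yet every term is `≥ 0` there.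
  have hroot : ((s.map fun r => X + C r).prod).eval (-a) = 0 := by
    rw [eval_multiset_prod]
    exact Multiset.prod_eq_zero
      (Multiset.mem_map.mpr ⟨_, Multiset.mem_map.mpr ⟨a, ha, rfl⟩, by simp⟩)
  rw [Multiset.prod_X_add_C_eq_sum_esymm, eval_finsetSum] at hroot
  refine (sum_pos' (fun j hj => ?_) ⟨0, by simp, ?_⟩).ne' hroot
  · simp only [eval_mul, eval_C, eval_pow, eval_X]
    refine mul_nonneg ?_ (pow_nonneg (by linarith) _)
    rcases j with _ | j
    · simp [Multiset.esymm]
    · exact hs _ (by simp only [Finset.mem_range, Finset.mem_Icc] at hj ⊢; omega)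
  · simpa [Multiset.esymm] using pow_pos (neg_pos.mpr hneg) _

theorem Multiset.forall_esymm_nonneg_iff {R : Type*} [CommRing R] [LinearOrder R]
    [IsStrictOrderedRing R] {s : Multiset R} :
    (∀ k ∈ Finset.Icc 1 (card s), 0 ≤ s.esymm k) ↔ ∀ a ∈ s, 0 ≤ a :=
  ⟨fun hs _ => nonneg_of_forall_esymm_nonneg hs, fun hs k _ => esymm_nonneg hs k⟩

theorem Matrix.IsHermitian.trace_pow {𝕜 n : Type*} [RCLike 𝕜] [Fintype n] [DecidableEq n]
    {A : Matrix n n 𝕜} (hA : A.IsHermitian) (l : ℕ) :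
    (A ^ l).trace = ∑ i, (hA.eigenvalues i : 𝕜) ^ l := by
  conv_lhs => rw [hA.spectral_theorem, ← map_pow, Unitary.conjStarAlgAut_apply, trace_mul_cycle,
    Unitary.coe_star_mul_self, one_mul, diagonal_pow, trace_diagonal]
  rfl

section DensityMatrix

variable {d : ℕ}

theorem Spoly_eq_esymm_eigenvalues {A : Matrix (Fin d) (Fin d) ℂ} (hA : A.IsHermitian) (m : ℕ) :
    Spoly A m = (univ.val.map hA.eigenvalues).esymm m := by
  induction m using Nat.strong_induction_on with
  | _ m ih =>
  rcases m with _ | k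
  · simp [Spoly, Multiset.esymm]
  · have newton := congrArg ((↑) : ℝ → ℂ) (Multiset.succ_mul_esymm_map_eq_sum hA.eigenvalues k)
    push_cast at newton
    rw [Spoly, eq_comm, eq_inv_mul_iff_mul_eq₀ (Nat.cast_add_one_ne_zero k), newton]
    refine sum_congr rfl fun l hl => ?_
    rw [hA.trace_pow, ih _ (by omega)]
    rfl

theorem Spoly_nonneg_iff_posSemidef {A : Matrix (Fin d) (Fin d) ℂ} (hA : A.IsHermitian) :
    (∀ m ∈ Icc 1 d, 0 ≤ Spoly A m) ↔ A.PosSemidef := by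
  have h := Multiset.forall_esymm_nonneg_iff (s := univ.val.map hA.eigenvalues)
  simp only [Multiset.card_map, card_val, card_univ, Fintype.card_fin, Multiset.forall_mem_map_iff,
    mem_val, mem_univ, true_implies] at h
  simp only [Spoly_eq_esymm_eigenvalues hA, Complex.zero_le_real, h,
    hA.posSemidef_iff_eigenvalues_nonneg, Pi.le_def, Pi.zero_apply]

theorem Sres_eq (ρ η : Matrix (Fin d) (Fin d) ℂ) (s : ℝ) (m : ℕ) :
    Sres ρ s m η = Spoly (s⁻¹ • ((1 + s) • η - ρ)) m := by
  simp only [Sres, ← Complex.ofReal_inv, Complex.coe_smul, ← Complex.ofReal_one,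
    ← Complex.ofReal_add]

theorem Sres_nonneg_iff {ρ η : Matrix (Fin d) (Fin d) ℂ} (hρ : ρ.IsHermitian)
    (hη : η.IsHermitian) {s : ℝ} (hs : 0 < s) :
    (∀ m ∈ Icc 1 d, 0 ≤ Sres ρ s m η) ↔ ((1 + s) • η - ρ).PosSemidef := by
  have hA : (s⁻¹ • ((1 + s) • η - ρ)).IsHermitian :=
    ((hη.smul (.all _)).sub hρ).smul (.all _)
  simp only [Sres_eq, Spoly_nonneg_iff_posSemidef hA]
  exact ⟨fun h => by simpa [smul_smul, hs.ne'] using h.smul hs.le,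
    fun h => h.smul (inv_pos.mpr hs).le⟩

theorem IsDensityMatrix.exists_diag_pos {ρ : Matrix (Fin d) (Fin d) ℂ} (hρ : IsDensityMatrix ρ) :
    ∃ i, 0 < ρ i i := by
  obtain ⟨i, -, hi⟩ := exists_ne_zero_of_sum_ne_zero (hρ.2 ▸ one_ne_zero : ρ.trace ≠ 0)
  exact ⟨i, hρ.1.diag_nonneg.lt_of_ne' hi⟩

theorem isDensityMatrix_diagonal_single (j : Fin d) :
    IsDensityMatrix (Matrix.diagonal (Pi.single j 1)) := by
  refine ⟨Matrix.posSemidef_diagonal_iff.mpr fun i => ?_, by simp [Matrix.trace_diagonal]⟩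
  rcases eq_or_ne i j with rfl | h <;> simp [*]

theorem IsDensityMatrix.inv_one_add_smul_add_smul {ρ σ : Matrix (Fin d) (Fin d) ℂ}
    (hρ : IsDensityMatrix ρ) (hσ : IsDensityMatrix σ) {s : ℝ} (hs : 0 ≤ s) :
    IsDensityMatrix ((1 + s)⁻¹ • (ρ + s • σ)) := by
  refine ⟨(hρ.1.add (hσ.1.smul hs)).smul (by positivity), ?_⟩
  rw [Matrix.trace_smul, Matrix.trace_add, Matrix.trace_smul, hρ.2, hσ.2, Complex.real_smul,
    Complex.real_smul]
  push_cast
  field_simp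

def detectionRegion (ρ : Matrix (Fin d) (Fin d) ℂ) (s : ℝ) : Set (Matrix (Fin d) (Fin d) ℂ) :=
  {η | IsDensityMatrix η ∧ ∀ m ∈ Icc 1 d, 0 ≤ Sres ρ s m η}

variable {ρ : Matrix (Fin d) (Fin d) ℂ} {s s' : ℝ}

theorem mem_detectionRegion_iff {η : Matrix (Fin d) (Fin d) ℂ} (hρ : ρ.IsHermitian) (hs : 0 < s) :
    η ∈ detectionRegion ρ s ↔ IsDensityMatrix η ∧ ((1 + s) • η - ρ).PosSemidef :=
  and_congr_right fun hη => Sres_nonneg_iff hρ hη.1.isHermitian hs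

theorem detectionRegion_mono (hρ : ρ.IsHermitian) (hs' : 0 < s') (hss : s' ≤ s) :
    detectionRegion ρ s' ⊆ detectionRegion ρ s := by
  intro η hη
  rw [mem_detectionRegion_iff hρ hs'] at hη
  rw [mem_detectionRegion_iff hρ (hs'.trans_le hss)]
  have hsplit : (1 + s) • η - ρ = ((1 + s') • η - ρ) + (s - s') • η := by module
  exact ⟨hη.1, hsplit ▸ hη.2.add (hη.1.1.smul (sub_nonneg.mpr hss))⟩

theorem exists_mem_detectionRegion_notMem (hd : 2 ≤ d) (hρ : IsDensityMatrix ρ) (hs' : 0 < s')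
    (hss : s' < s) : ∃ η ∈ detectionRegion ρ s, η ∉ detectionRegion ρ s' := by
  have hs : 0 < s := hs'.trans hss
  obtain ⟨i, hi⟩ := hρ.exists_diag_pos
  obtain ⟨j, hji⟩ : ∃ j : Fin d, j ≠ i :=
    Fintype.exists_ne_of_one_lt_card (by rw [Fintype.card_fin]; omega) i
  set σ : Matrix (Fin d) (Fin d) ℂ := Matrix.diagonal (Pi.single j 1)
  have hσ : IsDensityMatrix σ := isDensityMatrix_diagonal_single j
  have hσi : σ i i = 0 := by simp [σ, hji.symm]
  set η := (1 + s)⁻¹ • (ρ + s • σ)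
  have hη : IsDensityMatrix η := hρ.inv_one_add_smul_add_smul hσ hs.le
  refine ⟨η, ?_, fun hmem => ?_⟩
  · have hboundary : (1 + s) • η - ρ = s • σ := by
      simp only [η, smul_smul, mul_inv_cancel₀ (by positivity : (1 + s) ≠ 0), one_smul,
        add_sub_cancel_left]
    exact (mem_detectionRegion_iff hρ.1.isHermitian hs).2 ⟨hη, hboundary ▸ hσ.1.smul hs.le⟩
  · have hpsd := ((mem_detectionRegion_iff hρ.1.isHermitian hs').1 hmem).2
    have hii : ((1 + s') • η - ρ) i i = -(((s - s') / (1 + s) : ℝ) * ρ i i) := by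
      simp only [η, smul_add, Matrix.sub_apply, Matrix.add_apply, Matrix.smul_apply, hσi,
        smul_zero, add_zero, Complex.real_smul]
      push_cast
      field_simp
      ring
    have hneg : -(((s - s') / (1 + s) : ℝ) * ρ i i) < 0 :=
      neg_neg_of_pos (mul_pos (Complex.zero_lt_real.mpr (by apply div_pos <;> linarith)) hi)
    exact (hii ▸ hneg).not_ge hpsd.diag_nonneg

end DensityMatrix

/-- For `d ≥ 2`, a density matrix `ρ`, and `0 < s′ < s`, the set of density matrices `η`
with `S_{m,ρ,s′}(η) ≥ 0` for all `m ∈ {1, …, d}` is a strict subset of the corresponding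
set for `s`. -/
theorem detection_region_ssubset {d : ℕ} (hd : 2 ≤ d)
    (ρ : Matrix (Fin d) (Fin d) ℂ) (hρ : IsDensityMatrix ρ)
    (s s' : ℝ) (hs' : 0 < s') (hss : s' < s) :
    {η : Matrix (Fin d) (Fin d) ℂ | IsDensityMatrix η ∧
        ∀ m ∈ Finset.Icc 1 d, 0 ≤ Sres ρ s' m η} ⊂
      {η : Matrix (Fin d) (Fin d) ℂ | IsDensityMatrix η ∧
        ∀ m ∈ Finset.Icc 1 d, 0 ≤ Sres ρ s m η} :=
  (Set.ssubset_iff_of_subset (detectionRegion_mono hρ.1.isHermitian hs' hss.le)).2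
    (exists_mem_detectionRegion_notMem hd hρ hs' hss)
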